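/- Let n ≥ 0 and let A = ℤ/nℤ (so A = ℤ when n = 0). Let (V_I, D) be a hypercube complex over 𝔽₂ on {0,1}^N in which every V_I is finite-dimensional and carries an A-grading V_I = ⊕_{j∈A} V_I^j such that each diagonal component raises degree by 1 (d_I(V_I^j) ⊆ V_I^{j+1}), and suppose there is a function s : {0,1}^N → A such that every component satisfies D_{J,I}(V_I^j) ⊆ V_J^{j+1+s(I)−s(J)}. Grade V by total degree, V^i = ⊕_I V_I^{i−s(I)}, so that D raises total degree by 1. Then for every i ∈ A, dim_{𝔽₂} H^i(V, D) ≤ Σ_{I ∈ {0,1}^N} dim_{𝔽₂} H^{i−s(I)}(V_I, d_I). (This is Corollary 1.2 in abstract form, with s(I) playing the role of the grading shift σ(I) − n₋.) -/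

import Mathlib

/-! Filter the total complex by the subspaces `supportedOn V S` of vectors vanishing off a set
`S` of vertices. If `I₀` is minimal in `S`, then on `supportedOn V S` the projection to `V I₀`
intertwines `D` with `d_{I₀}`, and its kernel there is `supportedOn V (S.erase I₀)`.
Rank–nullity applied to cycles and boundaries then shows that `dim Z - dim B` in a fixed degree
is subadditive along this step, so induction on `S` bounds it for the whole complex by the sum
of the vertex contributions. The gradings enter only to see that `D` and each `d_I` raise
degree by one, which makes these differences the homology dimensions. -/

/-- The `(J,I)` component of an endomorphism `D` of the product `∀ I, V I`. -/
noncomputable def hcComp {ι : Type*} [DecidableEq ι] (V : ι → Type*)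
    [∀ i, AddCommGroup (V i)] [∀ i, Module (ZMod 2) (V i)]
    (D : (∀ i, V i) →ₗ[ZMod 2] (∀ i, V i)) (J I : ι) : V I →ₗ[ZMod 2] V J :=
  (LinearMap.proj J).comp (D.comp (LinearMap.single (ZMod 2) V I))

/-- The weight `w(I) = Σ_i I_i` of a vertex of the hypercube `{0,1}^N`. -/
def wt {N : ℕ} (I : Fin N → Bool) : ℕ :=
  (Finset.univ.filter fun i => I i = true).card

/-- Degree-`i` homology of a differential `d` on a space graded by `G : ZMod n → Submodule`:
(kernel of `d` in degree `i`) modulo (the image under `d` of degree `i - 1`). -/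
abbrev GrHmlg {W : Type*} [AddCommGroup W] [Module (ZMod 2) W] {n : ℕ}
    (d : W →ₗ[ZMod 2] W) (G : ZMod n → Submodule (ZMod 2) W) (i : ZMod n) :=
  ↥(LinearMap.ker d ⊓ G i) ⧸
    (Submodule.map d (G (i - 1))).comap (LinearMap.ker d ⊓ G i).subtype

open Module LinearMap

section Linear
variable {K W U : Type*} [Field K] [AddCommGroup W] [Module K W] [AddCommGroup U] [Module K U]

theorem Submodule.finrank_map_add_finrank_inf_ker [FiniteDimensional K W] (f : W →ₗ[K] U)
    (p : Submodule K W) :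
    finrank K (p.map f) + finrank K ↥(p ⊓ ker f) = finrank K p := by
  rw [← range_domRestrict, ← Submodule.map_comap_subtype, ← ker_domRestrict,
    Submodule.finrank_map_subtype_eq]
  exact (f.domRestrict p).finrank_range_add_finrank_ker

/-- The dimension of the homology at `P` when `d` maps `Q` into `ker d ⊓ P`. -/
noncomputable def homologyRank (d : W →ₗ[K] W) (P Q : Submodule K W) : ℤ :=
  finrank K ↥(ker d ⊓ P) - finrank K (Q.map d)

theorem homologyRank_le_of_intertwining [FiniteDimensional K W] [FiniteDimensional K U]
    (D : W →ₗ[K] W) (d : U →ₗ[K] U) (π : W →ₗ[K] U) {P Q : Submodule K W}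
    {P' Q' : Submodule K U} (hP : P.map π ≤ P') (hQ : Q' ≤ Q.map π)
    (hPcomm : ∀ x ∈ P, π (D x) = d (π x)) (hQcomm : ∀ x ∈ Q, π (D x) = d (π x)) :
    homologyRank D P Q ≤ homologyRank D (P ⊓ ker π) (Q ⊓ ker π) + homologyRank d P' Q' := by
  have hcycles : (ker D ⊓ P).map π ≤ ker d ⊓ P' := by
    rintro _ ⟨x, ⟨hDx, hx⟩, rfl⟩
    exact ⟨mem_ker.mpr (by rw [← hPcomm x hx, mem_ker.mp hDx, map_zero]), hP ⟨x, hx, rfl⟩⟩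
  have hbd_image : Q'.map d ≤ (Q.map D).map π := by
    rintro _ ⟨_, hy, rfl⟩
    obtain ⟨x, hx, rfl⟩ := hQ hy
    exact ⟨D x, ⟨x, hx, rfl⟩, hQcomm x hx⟩
  have hbd_ker : (Q ⊓ ker π).map D ≤ Q.map D ⊓ ker π := by
    rintro _ ⟨x, ⟨hx, hπx⟩, rfl⟩
    exact ⟨⟨x, hx, rfl⟩, mem_ker.mpr (by rw [hQcomm x hx, mem_ker.mp hπx, map_zero])⟩
  have hz := Submodule.finrank_map_add_finrank_inf_ker π (ker D ⊓ P)
  have hb := Submodule.finrank_map_add_finrank_inf_ker π (Q.map D)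
  have h1 := Submodule.finrank_mono hcycles
  have h2 := Submodule.finrank_mono hbd_image
  have h3 := Submodule.finrank_mono hbd_ker
  rw [inf_assoc] at hz
  unfold homologyRank
  omega

end Linear

theorem finrank_grHmlg_eq_homologyRank {W : Type*} [AddCommGroup W] [Module (ZMod 2) W]
    [FiniteDimensional (ZMod 2) W] {n : ℕ} {d : W →ₗ[ZMod 2] W} (hd : d ∘ₗ d = 0)
    {G : ZMod n → Submodule (ZMod 2) W} {i : ZMod n} (hG : (G (i - 1)).map d ≤ G i) :
    (finrank (ZMod 2) (GrHmlg d G i) : ℤ) = homologyRank d (G i) (G (i - 1)) := by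
  have hB : (G (i - 1)).map d ≤ ker d ⊓ G i := by
    rintro _ ⟨x, hx, rfl⟩
    exact ⟨show d (d x) = 0 from LinearMap.congr_fun hd x, hG ⟨x, hx, rfl⟩⟩
  have h : finrank (ZMod 2) (GrHmlg d G i) + finrank (ZMod 2) ((G (i - 1)).map d) =
      finrank (ZMod 2) ↥(ker d ⊓ G i) := by
    rw [← (Submodule.comapSubtypeEquivOfLe hB).finrank_eq]
    exact Submodule.finrank_quotient_add_finrank _
  unfold homologyRank
  omega

section Hypercube
open Finset
variable {ι : Type*} {V : ι → Type*} [∀ I, AddCommGroup (V I)] [∀ I, Module (ZMod 2) (V I)]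

variable (V) in
def supportedOn (S : Finset ι) : Submodule (ZMod 2) (∀ I, V I) :=
  Submodule.pi (↑S)ᶜ fun _ => ⊥

theorem mem_supportedOn {S : Finset ι} {x : ∀ I, V I} :
    x ∈ supportedOn V S ↔ ∀ I ∉ S, x I = 0 := by
  simp [supportedOn, Submodule.mem_pi]

theorem supportedOn_empty : supportedOn V ∅ = ⊥ := by
  ext x
  simp [mem_supportedOn, funext_iff]

theorem supportedOn_univ [Fintype ι] : supportedOn V univ = ⊤ := by
  ext x
  simp [mem_supportedOn]

variable [DecidableEq ι]

theorem supportedOn_erase (S : Finset ι) (I₀ : ι) :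
    supportedOn V S ⊓ ker (proj I₀) = supportedOn V (S.erase I₀) := by
  ext x
  simp only [Submodule.mem_inf, mem_supportedOn, mem_ker, proj_apply,
    mem_erase, not_and_or, ne_eq, not_not]
  grind

variable [Fintype ι] (D : (∀ I, V I) →ₗ[ZMod 2] (∀ I, V I))

theorem apply_eq_sum_hcComp (x : ∀ I, V I) (J : ι) : D x J = ∑ I, hcComp V D J I (x I) := by
  conv_lhs => rw [← univ_sum_single x]
  simp [hcComp]

theorem map_pi_le_pi_of_hcComp {P Q : ∀ I, Submodule (ZMod 2) (V I)}
    (h : ∀ I J, ∀ x ∈ Q I, hcComp V D J I x ∈ P J) :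
    (Submodule.pi Set.univ Q).map D ≤ Submodule.pi Set.univ P := by
  rintro _ ⟨x, hx, rfl⟩ J -
  rw [apply_eq_sum_hcComp]
  exact Submodule.sum_mem _ fun I _ => h I J (x I) (hx I (Set.mem_univ I))

variable [PartialOrder ι] {D}

theorem hcComp_comp_self (hD2 : D ∘ₗ D = 0) (hsupp : ∀ I J, ¬ I ≤ J → hcComp V D J I = 0)
    (I : ι) : hcComp V D I I ∘ₗ hcComp V D I I = 0 := by
  ext y
  have hDD : D (D (Pi.single I y)) I = 0 := by rw [← comp_apply, hD2]; rfl
  rw [apply_eq_sum_hcComp, sum_eq_single I] at hDD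
  · exact hDD
  · intro J _ hJI
    by_cases hIJ : I ≤ J
    · rw [hsupp J I fun hJ => hJI (le_antisymm hJ hIJ)]; rfl
    · rw [show D (Pi.single I y) J = hcComp V D J I y from rfl, hsupp I J hIJ,
        LinearMap.zero_apply, map_zero]
  · simp

theorem apply_eq_hcComp_of_minimal (hsupp : ∀ I J, ¬ I ≤ J → hcComp V D J I = 0)
    {S : Finset ι} {I₀ : ι} (hI₀ : Minimal (· ∈ S) I₀) {x : ∀ I, V I}
    (hx : x ∈ supportedOn V S) : D x I₀ = hcComp V D I₀ I₀ (x I₀) := by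
  rw [apply_eq_sum_hcComp, sum_eq_single I₀]
  · intro I _ hI
    by_cases hIS : I ∈ S
    · rw [hsupp I I₀ fun hle => hI (le_antisymm hle (hI₀.2 hIS hle))]; rfl
    · rw [mem_supportedOn.mp hx I hIS, map_zero]
  · simp

theorem homologyRank_supportedOn_le_sum [∀ I, Module.Finite (ZMod 2) (V I)]
    (hsupp : ∀ I J, ¬ I ≤ J → hcComp V D J I = 0) (P Q : ∀ I, Submodule (ZMod 2) (V I))
    (S : Finset ι) :
    homologyRank D (Submodule.pi Set.univ P ⊓ supportedOn V S)
        (Submodule.pi Set.univ Q ⊓ supportedOn V S) ≤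
      ∑ I ∈ S, homologyRank (hcComp V D I I) (P I) (Q I) := by
  induction S using strongInduction with
  | H S ih =>
  obtain rfl | ⟨I, hI⟩ := S.eq_empty_or_nonempty
  · rw [supportedOn_empty, inf_bot_eq, inf_bot_eq, homologyRank, inf_bot_eq, Submodule.map_bot]
    simp
  obtain ⟨I₀, hI₀⟩ := exists_minimal_of_wellFoundedLT (· ∈ S) ⟨I, hI⟩
  have hcomm : ∀ x ∈ supportedOn V S,
      proj (R := ZMod 2) I₀ (D x) = hcComp V D I₀ I₀ (x I₀) :=
    fun x hx => apply_eq_hcComp_of_minimal hsupp hI₀ hx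
  have hstep := homologyRank_le_of_intertwining D (hcComp V D I₀ I₀) (proj I₀)
    (P := Submodule.pi Set.univ P ⊓ supportedOn V S)
    (Q := Submodule.pi Set.univ Q ⊓ supportedOn V S)
    (P' := P I₀) (Q' := Q I₀) ?_ ?_ (fun x hx => hcomm x hx.2) (fun x hx => hcomm x hx.2)
  · rw [inf_assoc, inf_assoc, supportedOn_erase] at hstep
    rw [← add_sum_erase S _ hI₀.1]
    linarith [ih _ (erase_ssubset hI₀.1)]
  · rintro _ ⟨x, ⟨hx, -⟩, rfl⟩
    exact hx I₀ (Set.mem_univ I₀)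
  · intro y hy
    refine ⟨Pi.single I₀ y, ⟨fun J _ => ?_, mem_supportedOn.mpr fun J hJ => ?_⟩, by simp⟩
    · by_cases hJ : J = I₀
      · subst hJ; simpa using hy
      · simp [hJ]
    · exact Pi.single_eq_of_ne (by rintro rfl; exact hJ hI₀.1) y

theorem homologyRank_pi_le_sum [∀ I, Module.Finite (ZMod 2) (V I)]
    (hsupp : ∀ I J, ¬ I ≤ J → hcComp V D J I = 0) (P Q : ∀ I, Submodule (ZMod 2) (V I)) :
    homologyRank D (Submodule.pi Set.univ P) (Submodule.pi Set.univ Q) ≤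
      ∑ I, homologyRank (hcComp V D I I) (P I) (Q I) := by
  simpa [supportedOn_univ] using homologyRank_supportedOn_le_sum hsupp P Q univ

end Hypercube

theorem hypercube_graded_rank_inequality_general
    (n N : ℕ) (V : (Fin N → Bool) → Type*)
    [∀ I, AddCommGroup (V I)] [∀ I, Module (ZMod 2) (V I)]
    [∀ I, Module.Finite (ZMod 2) (V I)]
    (D : (∀ I, V I) →ₗ[ZMod 2] (∀ I, V I))
    (hD2 : D.comp D = 0)
    (hsupp : ∀ I J : Fin N → Bool, ¬ I ≤ J → hcComp V D J I = 0)
    (g : ∀ I : Fin N → Bool, ZMod n → Submodule (ZMod 2) (V I))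
    (s : (Fin N → Bool) → ZMod n)
    (hcompdeg : ∀ (I J : Fin N → Bool) (j : ZMod n), ∀ x ∈ g I j,
      hcComp V D J I x ∈ g J (j + 1 + s I - s J)) :
    ∀ i : ZMod n,
      Module.finrank (ZMod 2)
          (GrHmlg D (fun i => Submodule.pi Set.univ fun I => g I (i - s I)) i) ≤
        ∑ I : Fin N → Bool,
          Module.finrank (ZMod 2) (GrHmlg (hcComp V D I I) (g I) (i - s I)) := by
  intro i
  have htotal : (Submodule.pi Set.univ fun I => g I (i - 1 - s I)).map D ≤
      Submodule.pi Set.univ fun I => g I (i - s I) :=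
    map_pi_le_pi_of_hcComp D fun I J x hx => by
      simpa [show i - 1 - s I + 1 + s I - s J = i - s J by ring] using hcompdeg I J _ x hx
  have hvertex : ∀ I, (g I (i - s I - 1)).map (hcComp V D I I) ≤ g I (i - s I) := by
    rintro I _ ⟨x, hx, rfl⟩
    simpa using hcompdeg I I _ x hx
  have hrank :=
    homologyRank_pi_le_sum hsupp (fun I => g I (i - s I)) (fun I => g I (i - s I - 1))
  zify
  rw [finrank_grHmlg_eq_homologyRank (G := fun i => Submodule.pi Set.univ fun I => g I (i - s I))
    hD2 htotal]
  simp only [finrank_grHmlg_eq_homologyRank (hcComp_comp_self hD2 hsupp _) (hvertex _),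
    sub_right_comm i (1 : ZMod n)]
  exact hrank

/-- Graded rank inequality (Corollary 1.2 in abstract form): if a hypercube complex
carries `ZMod n`-gradings on the vertex spaces, with the diagonal differentials of
degree 1 and the component `D_{J,I}` of degree `1 + s(I) - s(J)`, then in each total
degree `i` the dimension of the homology of the total complex is bounded by
`Σ_I dim H^{i-s(I)}(V_I, d_I)`. The total grading on `V = ⊕_I V_I` is
`V^i = ⊕_I V_I^{i-s(I)}`. -/
theorem hypercube_graded_rank_inequality
    (n N : ℕ) (hN : 1 ≤ N) (V : (Fin N → Bool) → Type*)
    [∀ I, AddCommGroup (V I)] [∀ I, Module (ZMod 2) (V I)]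
    [∀ I, Module.Finite (ZMod 2) (V I)]
    (D : (∀ I, V I) →ₗ[ZMod 2] (∀ I, V I))
    (hD2 : D.comp D = 0)
    (hsupp : ∀ I J : Fin N → Bool, ¬ I ≤ J → hcComp V D J I = 0)
    (g : ∀ I : Fin N → Bool, ZMod n → Submodule (ZMod 2) (V I))
    (hg : ∀ I, DirectSum.IsInternal (g I))
    (s : (Fin N → Bool) → ZMod n)
    (hdiag : ∀ (I : Fin N → Bool) (j : ZMod n), ∀ x ∈ g I j,
      hcComp V D I I x ∈ g I (j + 1))
    (hcompdeg : ∀ (I J : Fin N → Bool) (j : ZMod n), ∀ x ∈ g I j,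
      hcComp V D J I x ∈ g J (j + 1 + s I - s J)) :
    ∀ i : ZMod n,
      Module.finrank (ZMod 2)
          (GrHmlg D (fun i => Submodule.pi Set.univ fun I => g I (i - s I)) i) ≤
        ∑ I : Fin N → Bool,
          Module.finrank (ZMod 2) (GrHmlg (hcComp V D I I) (g I) (i - s I)) :=
  hypercube_graded_rank_inequality_general n N V D hD2 hsupp g s hcompdeg
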